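/- Let (X, P) be a set system on n elements with VC-dimension at most d, and let δ be an integer with 1 ≤ δ ≤ n such that the symmetric difference |Δ(R,S)| ≥ δ for every two distinct sets R, S ∈ P. Then |P| ≤ C·(n/δ)^d for a constant C depending only on d. -/

import Mathlib

/-!
Fix `k ≈ 4dn/δ`. For a `k`-set `A`, the members of `P` with a common trace on `A` are still
`δ`-separated, and counting symmetric differences inside each trace class gives
`δ|P| ≤ δ|P|_A| + 2 ∑_{x ∉ A} w(A, x)`, where `w(A, x)` is the total weight of the edges in
direction `x` of the one-inclusion graph of the traces on `insert x A`, an edge weighing the smaller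
multiplicity of its two ends. Haussler's edge bound (a family of VC-dimension `d` has at most `d`
one-inclusion edges per member), applied to every superlevel set of the multiplicities, bounds the
total weight on a `(k + 1)`-set by `d|P|`. Averaging over all `A` makes the edge term at most
`2d(n - k)/(k + 1) · |P| ≤ |P|/2`, while Sauer–Shelah gives `|P|_A| ≤ (d + 1)(k + 1)^d`.
-/

open Finset

namespace Finset

variable {α : Type*} [DecidableEq α]

section Shatters

lemma vcDim_le_vcDim_of_shatters {𝒜 ℬ : Finset (Finset α)} (h : ∀ s, 𝒜.Shatters s → ℬ.Shatters s) :
    𝒜.vcDim ≤ ℬ.vcDim :=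
  Finset.sup_le fun s hs ↦ (h s (mem_shatterer.1 hs)).card_le_vcDim

variable {𝒜 : Finset (Finset α)} {a : α} {s : Finset α}

lemma Shatters.of_image_erase (hs : (𝒜.image (erase · a)).Shatters s) : 𝒜.Shatters s := by
  have has : a ∉ s := by
    obtain ⟨u, hu, hsu⟩ := hs.exists_superset
    obtain ⟨v, -, rfl⟩ := mem_image.1 hu
    exact fun ha ↦ notMem_erase a v (hsu ha)
  intro t ht
  obtain ⟨u, hu, rfl⟩ := hs ht
  obtain ⟨v, hv, rfl⟩ := mem_image.1 hu
  exact ⟨v, hv, by rw [inter_erase, erase_eq_of_notMem fun h ↦ has (mem_inter.1 h).1]⟩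

lemma Shatters.insert_of_memberSubfamily_inter
    (hs : (𝒜.memberSubfamily a ∩ 𝒜.nonMemberSubfamily a).Shatters s) :
    a ∉ s ∧ 𝒜.Shatters (insert a s) := by
  have has : a ∉ s := by
    obtain ⟨u, hu, hsu⟩ := hs.exists_superset
    exact fun ha ↦ (mem_nonMemberSubfamily.1 (mem_inter.1 hu).2).2 (hsu ha)
  refine ⟨has, fun t ht ↦ ?_⟩
  obtain ⟨u, hu, hsu⟩ := hs (subset_insert_iff.1 ht)
  obtain ⟨hu₁, hu₀⟩ := mem_inter.1 hu
  by_cases hat : a ∈ t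
  · refine ⟨insert a u, (mem_memberSubfamily.1 hu₁).1, ?_⟩
    rw [← insert_inter_distrib, hsu, insert_erase hat]
  · refine ⟨u, (mem_nonMemberSubfamily.1 hu₀).1, ?_⟩
    rw [insert_inter_of_notMem (mem_nonMemberSubfamily.1 hu₀).2, hsu, erase_eq_of_notMem hat]

lemma vcDim_memberSubfamily_union_le :
    (𝒜.memberSubfamily a ∪ 𝒜.nonMemberSubfamily a).vcDim ≤ 𝒜.vcDim := by
  rw [memberSubfamily_union_nonMemberSubfamily]
  exact vcDim_le_vcDim_of_shatters fun _ hs ↦ hs.of_image_erase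

lemma vcDim_memberSubfamily_inter_lt (h : (𝒜.memberSubfamily a ∩ 𝒜.nonMemberSubfamily a).Nonempty) :
    (𝒜.memberSubfamily a ∩ 𝒜.nonMemberSubfamily a).vcDim < 𝒜.vcDim := by
  have key : ∀ s, (𝒜.memberSubfamily a ∩ 𝒜.nonMemberSubfamily a).Shatters s → #s < 𝒜.vcDim := by
    intro s hs
    obtain ⟨has, hins⟩ := hs.insert_of_memberSubfamily_inter
    simpa [card_insert_of_notMem has] using hins.card_le_vcDim
  exact (Finset.sup_lt_iff (key ∅ (shatters_empty.2 h))).2 fun s hs ↦ key s (mem_shatterer.1 hs)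

lemma Shatters.of_image_inter {P : Finset (Finset α)} {B : Finset α}
    (hs : (P.image (· ∩ B)).Shatters s) : P.Shatters s := by
  have hsB : s ⊆ B := by
    obtain ⟨u, hu, hsu⟩ := hs.exists_superset
    obtain ⟨R, -, rfl⟩ := mem_image.1 hu
    exact hsu.trans inter_subset_right
  intro t ht
  obtain ⟨u, hu, rfl⟩ := hs ht
  obtain ⟨R, hR, rfl⟩ := mem_image.1 hu
  exact ⟨R, hR, by rw [← inter_assoc, inter_right_comm, inter_eq_left.2 hsB]⟩

lemma vcDim_image_inter_le (P : Finset (Finset α)) (B : Finset α) :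
    (P.image (· ∩ B)).vcDim ≤ P.vcDim :=
  vcDim_le_vcDim_of_shatters fun _ hs ↦ hs.of_image_inter

end Shatters

section OneInclusion

variable [Fintype α] {𝒜 ℬ : Finset (Finset α)}

/-- The one-inclusion edge `{S, insert x S}` is recorded as the pair `(S, x)`. -/
def oneInclusionEdges (𝒜 : Finset (Finset α)) : Finset (Finset α × α) :=
  {e ∈ 𝒜 ×ˢ univ | e.2 ∉ e.1 ∧ insert e.2 e.1 ∈ 𝒜}

@[simp]
lemma mem_oneInclusionEdges {e : Finset α × α} :
    e ∈ oneInclusionEdges 𝒜 ↔ e.1 ∈ 𝒜 ∧ e.2 ∉ e.1 ∧ insert e.2 e.1 ∈ 𝒜 := by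
  simp [oneInclusionEdges]

lemma oneInclusionEdges_filter (p : Finset α → Prop) [DecidablePred p] :
    oneInclusionEdges (𝒜.filter p) =
      (oneInclusionEdges 𝒜).filter fun e ↦ p e.1 ∧ p (insert e.2 e.1) := by
  ext e
  simp only [mem_oneInclusionEdges, mem_filter]
  tauto

lemma card_oneInclusionEdges_add_le :
    #(oneInclusionEdges 𝒜) + #(oneInclusionEdges ℬ) ≤
      #(oneInclusionEdges (𝒜 ∪ ℬ)) + #(oneInclusionEdges (𝒜 ∩ ℬ)) := by
  rw [← card_union_add_card_inter]
  gcongr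
  · exact union_subset (fun e he ↦ by simp_all) (fun e he ↦ by simp_all)
  · intro e he
    simp_all

lemma oneInclusionEdges_subset (a : α) :
    oneInclusionEdges 𝒜 ⊆
      ((𝒜.memberSubfamily a ∩ 𝒜.nonMemberSubfamily a) ×ˢ {a} ∪
        oneInclusionEdges (𝒜.nonMemberSubfamily a)) ∪
        (oneInclusionEdges (𝒜.memberSubfamily a)).image fun e ↦ (insert a e.1, e.2) := by
  rintro ⟨S, x⟩ he
  simp only [mem_oneInclusionEdges] at he
  obtain ⟨hS, hxS, hxS'⟩ := he
  simp only [mem_union, mem_product, mem_inter, mem_memberSubfamily, mem_nonMemberSubfamily,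
    mem_singleton, mem_oneInclusionEdges, mem_image, Prod.mk.injEq, Prod.exists]
  obtain rfl | hxa := eq_or_ne x a
  · exact Or.inl (Or.inl ⟨⟨⟨hxS', hxS⟩, hS, hxS⟩, rfl⟩)
  by_cases haS : a ∈ S
  · refine Or.inr ⟨S.erase a, x, ⟨⟨by rwa [insert_erase haS], notMem_erase a S⟩,
      fun h ↦ hxS (mem_of_mem_erase h), ?_, ?_⟩, insert_erase haS, rfl⟩
    · rwa [insert_comm, insert_erase haS]
    · simp [hxa.symm]
  · exact Or.inl (Or.inr ⟨⟨hS, haS⟩, hxS, hxS', by simp [hxa.symm, haS]⟩)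

lemma card_oneInclusionEdges_le_member_nonMember (a : α) :
    #(oneInclusionEdges 𝒜) ≤ #(𝒜.memberSubfamily a ∩ 𝒜.nonMemberSubfamily a) +
      #(oneInclusionEdges (𝒜.nonMemberSubfamily a)) +
      #(oneInclusionEdges (𝒜.memberSubfamily a)) := by
  refine (card_le_card (oneInclusionEdges_subset a)).trans ?_
  refine (card_union_le _ _).trans (add_le_add ((card_union_le _ _).trans ?_) card_image_le)
  rw [card_product, card_singleton, mul_one]

theorem card_oneInclusionEdges_le (𝒜 : Finset (Finset α)) :
    #(oneInclusionEdges 𝒜) ≤ 𝒜.vcDim * #𝒜 := by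
  suffices ∀ u : Finset α, ∀ 𝒜 : Finset (Finset α), (∀ s ∈ 𝒜, s ⊆ u) →
      #(oneInclusionEdges 𝒜) ≤ 𝒜.vcDim * #𝒜 from this univ 𝒜 fun s _ ↦ subset_univ s
  intro u
  induction u using Finset.induction_on with
  | empty =>
    intro 𝒜 h𝒜
    suffices oneInclusionEdges 𝒜 = ∅ by simp [this]
    refine eq_empty_of_forall_notMem fun e he ↦ ?_
    exact insert_ne_empty _ _ (subset_empty.1 (h𝒜 _ (mem_oneInclusionEdges.1 he).2.2))
  | insert a u _ ih =>
    -- the edges in direction `a` are indexed by `𝒜₁ ∩ 𝒜₀`, whose VC-dimension is smaller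
    intro 𝒜 h𝒜
    set 𝒜₁ := 𝒜.memberSubfamily a
    set 𝒜₀ := 𝒜.nonMemberSubfamily a
    have h₁ : ∀ s ∈ 𝒜₁, s ⊆ u := fun s hs ↦ by
      rw [mem_memberSubfamily] at hs
      exact (insert_subset_insert_iff hs.2).1 (h𝒜 _ hs.1)
    have h₀ : ∀ s ∈ 𝒜₀, s ⊆ u := fun s hs ↦ by
      rw [mem_nonMemberSubfamily] at hs
      exact (subset_insert_iff_of_notMem hs.2).1 (h𝒜 _ hs.1)
    have hU := ih (𝒜₁ ∪ 𝒜₀) fun s hs ↦ (mem_union.1 hs).elim (h₁ s) (h₀ s)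
    have hI := ih (𝒜₁ ∩ 𝒜₀) fun s hs ↦ h₁ s (mem_inter.1 hs).1
    have hI' : (1 + (𝒜₁ ∩ 𝒜₀).vcDim) * #(𝒜₁ ∩ 𝒜₀) ≤ 𝒜.vcDim * #(𝒜₁ ∩ 𝒜₀) := by
      obtain h | h := (𝒜₁ ∩ 𝒜₀).eq_empty_or_nonempty
      · simp [h]
      · have : (𝒜₁ ∩ 𝒜₀).vcDim < 𝒜.vcDim := vcDim_memberSubfamily_inter_lt h
        gcongr
        omega
    have hUd : (𝒜₁ ∪ 𝒜₀).vcDim ≤ 𝒜.vcDim := vcDim_memberSubfamily_union_le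
    calc #(oneInclusionEdges 𝒜)
        ≤ #(𝒜₁ ∩ 𝒜₀) + #(oneInclusionEdges 𝒜₀) + #(oneInclusionEdges 𝒜₁) :=
          card_oneInclusionEdges_le_member_nonMember a
      _ ≤ #(𝒜₁ ∩ 𝒜₀) + (#(oneInclusionEdges (𝒜₁ ∪ 𝒜₀)) + #(oneInclusionEdges (𝒜₁ ∩ 𝒜₀))) := by
          have := card_oneInclusionEdges_add_le (𝒜 := 𝒜₁) (ℬ := 𝒜₀)
          omega
      _ ≤ 𝒜.vcDim * #(𝒜₁ ∪ 𝒜₀) + 𝒜.vcDim * #(𝒜₁ ∩ 𝒜₀) := by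
          have := Nat.mul_le_mul_right #(𝒜₁ ∪ 𝒜₀) hUd
          nlinarith
      _ = 𝒜.vcDim * #𝒜 := by
          rw [← mul_add, card_union_add_card_inter,
            card_memberSubfamily_add_card_nonMemberSubfamily]

lemma sum_min_le_of_vcDim_filter_le (w : Finset α → ℕ) {d : ℕ}
    (hd : ∀ k, (𝒜.filter (k < w ·)).vcDim ≤ d) :
    ∑ e ∈ oneInclusionEdges 𝒜, min (w e.1) (w (insert e.2 e.1)) ≤ d * ∑ s ∈ 𝒜, w s := by
  set N := ∑ s ∈ 𝒜, w s
  have hw : ∀ s ∈ 𝒜, w s ≤ N := fun s hs ↦ single_le_sum (fun _ _ ↦ Nat.zero_le _) hs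
  -- layer-cake decomposition `m = #{k < N | k < m}`
  have layer : ∀ m ≤ N, ∑ k ∈ range N, (if k < m then 1 else 0) = m := by
    intro m hm
    rw [← card_filter, show {k ∈ range N | k < m} = range m by ext; simp; omega, card_range]
  calc ∑ e ∈ oneInclusionEdges 𝒜, min (w e.1) (w (insert e.2 e.1))
      = ∑ e ∈ oneInclusionEdges 𝒜, ∑ k ∈ range N,
          if k < w e.1 ∧ k < w (insert e.2 e.1) then 1 else 0 := by
        refine sum_congr rfl fun e he ↦ ?_
        simp only [← lt_min_iff]
        exact (layer _ ((min_le_left _ _).trans (hw _ (mem_oneInclusionEdges.1 he).1))).symm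
    _ = ∑ k ∈ range N, #(oneInclusionEdges (𝒜.filter (k < w ·))) := by
        rw [sum_comm]
        simp only [oneInclusionEdges_filter, card_filter]
    _ ≤ ∑ k ∈ range N, d * #(𝒜.filter (k < w ·)) :=
        sum_le_sum fun k _ ↦ (card_oneInclusionEdges_le _).trans (Nat.mul_le_mul_right _ (hd k))
    _ = d * N := by
        simp only [← mul_sum, card_filter]
        rw [sum_comm]
        exact congrArg _ (sum_congr rfl fun s hs ↦ layer _ (hw s hs))

lemma sum_oneInclusionEdges_powerset {M : Type*} [AddCommMonoid M] (B : Finset α)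
    (g : Finset α × α → M) :
    ∑ e ∈ oneInclusionEdges B.powerset, g e = ∑ x ∈ B, ∑ t ∈ (B.erase x).powerset, g (t, x) := by
  rw [sum_sigma']
  refine sum_nbij' (fun e ↦ ⟨e.2, e.1⟩) (fun p ↦ (p.2, p.1)) ?_ ?_ (fun _ _ ↦ rfl)
    (fun _ _ ↦ rfl) (fun _ _ ↦ rfl)
  · rintro ⟨t, x⟩ he
    simp only [mem_oneInclusionEdges, mem_powerset, insert_subset_iff] at he
    simp [subset_erase, he.2.1, he.2.2]
  · rintro ⟨x, t⟩ hp
    simp only [mem_sigma, mem_powerset, subset_erase] at hp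
    simp [insert_subset_iff, hp.1, hp.2.1, hp.2.2]

end OneInclusion

section Separated

variable [Fintype α]

lemma sum_sum_card_symmDiff (G : Finset (Finset α)) :
    ∑ R ∈ G, ∑ S ∈ G, #(symmDiff R S) = 2 * ∑ x, #{R ∈ G | x ∉ R} * #{R ∈ G | x ∈ R} := by
  have hcard : ∀ R S : Finset α, #(symmDiff R S) = ∑ x,
      ((if x ∉ R then (1 : ℕ) else 0) * (if x ∈ S then 1 else 0) +
        (if x ∉ S then 1 else 0) * (if x ∈ R then 1 else 0)) := by
    intro R S
    rw [← univ_inter (symmDiff R S), ← filter_mem_eq_inter, card_filter]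
    refine sum_congr rfl fun x _ ↦ ?_
    by_cases hR : x ∈ R <;> by_cases hS : x ∈ S <;> simp [mem_symmDiff, hR, hS]
  calc ∑ R ∈ G, ∑ S ∈ G, #(symmDiff R S)
      = ∑ x, ∑ R ∈ G, ∑ S ∈ G, ((if x ∉ R then (1 : ℕ) else 0) * (if x ∈ S then 1 else 0) +
          (if x ∉ S then 1 else 0) * (if x ∈ R then 1 else 0)) := by
        simp only [hcard]
        exact (sum_congr rfl fun _ _ ↦ sum_comm).trans sum_comm
    _ = ∑ x, 2 * (#{R ∈ G | x ∉ R} * #{R ∈ G | x ∈ R}) := by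
        refine sum_congr rfl fun x _ ↦ ?_
        rw [two_mul, card_filter, card_filter, sum_mul_sum]
        simp only [sum_add_distrib]
        exact congrArg _ sum_comm
    _ = 2 * ∑ x, #{R ∈ G | x ∉ R} * #{R ∈ G | x ∈ R} := (mul_sum _ _ _).symm

lemma card_mul_le_of_le_card_symmDiff (G : Finset (Finset α)) {δ : ℕ}
    (hG : ∀ R ∈ G, ∀ S ∈ G, R ≠ S → δ ≤ #(symmDiff R S)) :
    #G * δ ≤ δ + 2 * ∑ x, min #{R ∈ G | x ∉ R} #{R ∈ G | x ∈ R} := by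
  obtain hG0 | hGpos := Nat.eq_zero_or_pos #G
  · simp [hG0]
  refine Nat.le_of_mul_le_mul_left ?_ hGpos
  have hrow : ∀ R ∈ G, #G * δ ≤ δ + ∑ S ∈ G, #(symmDiff R S) := by
    intro R hR
    rw [← sum_erase G (f := fun S ↦ #(symmDiff R S)) (a := R) (by simp)]
    calc #G * δ = δ + ∑ _S ∈ G.erase R, δ := by
          rw [← card_erase_add_one hR, sum_const, smul_eq_mul]
          ring
      _ ≤ δ + ∑ S ∈ G.erase R, #(symmDiff R S) := by
          gcongr with S hS
          exact hG R hR S (mem_erase.1 hS).2 (mem_erase.1 hS).1.symm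
  have hprod : ∀ x, #{R ∈ G | x ∉ R} * #{R ∈ G | x ∈ R} ≤
      #G * min #{R ∈ G | x ∉ R} #{R ∈ G | x ∈ R} := by
    intro x
    rw [← card_filter_add_card_filter_not (s := G) (fun R ↦ x ∉ R)]
    simp only [not_not]
    rcases le_total #{R ∈ G | x ∉ R} #{R ∈ G | x ∈ R} with h | h
    · rw [min_eq_left h]; nlinarith
    · rw [min_eq_right h]; nlinarith
  calc #G * (#G * δ) ≤ ∑ R ∈ G, (δ + ∑ S ∈ G, #(symmDiff R S)) := by
        rw [← smul_eq_mul, ← sum_const]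
        exact sum_le_sum hrow
    _ = #G * δ + 2 * ∑ x, #{R ∈ G | x ∉ R} * #{R ∈ G | x ∈ R} := by
        rw [sum_add_distrib, sum_const, smul_eq_mul, sum_sum_card_symmDiff]
    _ ≤ #G * δ + 2 * ∑ x, #G * min #{R ∈ G | x ∉ R} #{R ∈ G | x ∈ R} := by
        exact Nat.add_le_add_left (Nat.mul_le_mul_left _ (sum_le_sum fun x _ ↦ hprod x)) _
    _ = #G * (δ + 2 * ∑ x, min #{R ∈ G | x ∉ R} #{R ∈ G | x ∈ R}) := by
        rw [← mul_sum]
        ring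

end Separated

section Traces

variable {P : Finset (Finset α)} {A B t : Finset α} {x : α}

def traceCount (P : Finset (Finset α)) (B t : Finset α) : ℕ := #{R ∈ P | R ∩ B = t}

lemma sum_traceCount_powerset (P : Finset (Finset α)) (B : Finset α) :
    ∑ t ∈ B.powerset, traceCount P B t = #P :=
  (card_eq_sum_card_fiberwise fun _ _ ↦ mem_powerset.2 inter_subset_right).symm

lemma filter_lt_traceCount_subset (k : ℕ) :
    B.powerset.filter (k < traceCount P B ·) ⊆ P.image (· ∩ B) := by
  intro t ht
  obtain ⟨R, hR⟩ := card_pos.1 (Nat.zero_lt_of_lt (mem_filter.1 ht).2)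
  exact mem_image.2 ⟨R, (mem_filter.1 hR).1, (mem_filter.1 hR).2⟩

lemma traceCount_insert (hx : x ∉ A) (ht : t ⊆ A) :
    traceCount P (insert x A) t = #{R ∈ {R ∈ P | R ∩ A = t} | x ∉ R} := by
  rw [traceCount, filter_filter]
  refine congrArg _ (filter_congr fun R _ ↦ ?_)
  by_cases hxR : x ∈ R
  · simp only [inter_insert_of_mem hxR, hxR, not_true_eq_false, and_false, iff_false]
    exact fun h ↦ hx (ht (h ▸ mem_insert_self x _))
  · simp [inter_insert_of_notMem hxR, hxR]

lemma traceCount_insert_insert (hx : x ∉ A) (ht : t ⊆ A) :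
    traceCount P (insert x A) (insert x t) = #{R ∈ {R ∈ P | R ∩ A = t} | x ∈ R} := by
  rw [traceCount, filter_filter]
  refine congrArg _ (filter_congr fun R _ ↦ ?_)
  by_cases hxR : x ∈ R
  · have hxRA : x ∉ R ∩ A := fun h ↦ hx (mem_inter.1 h).2
    rw [inter_insert_of_mem hxR]
    refine ⟨fun h ↦ ⟨?_, hxR⟩, fun h ↦ by rw [h.1]⟩
    rw [← erase_insert hxRA, h, erase_insert fun h ↦ hx (ht h)]
  · simp only [inter_insert_of_notMem hxR, hxR, and_false, iff_false]
    exact fun h ↦ hxR (mem_inter.1 (h ▸ mem_insert_self x t)).1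

lemma card_image_inter_le {d : ℕ} (hd : P.vcDim ≤ d) (A : Finset α) :
    #(P.image (· ∩ A)) ≤ (d + 1) * (#A + 1) ^ d := by
  calc #(P.image (· ∩ A))
      ≤ #(P.image (· ∩ A)).shatterer := card_le_card_shatterer _
    _ ≤ #((range (d + 1)).biUnion (A.powersetCard ·)) := by
        refine card_le_card fun s hs ↦ mem_biUnion.2 ⟨#s, ?_, mem_powersetCard.2 ⟨?_, rfl⟩⟩
        · have := (mem_shatterer.1 hs).card_le_vcDim.trans ((vcDim_image_inter_le P A).trans hd)
          exact mem_range.2 (by omega)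
        · obtain ⟨u, hu, hsu⟩ := (mem_shatterer.1 hs).exists_superset
          obtain ⟨R, -, rfl⟩ := mem_image.1 hu
          exact hsu.trans inter_subset_right
    _ ≤ ∑ i ∈ range (d + 1), #(A.powersetCard i) := card_biUnion_le
    _ ≤ ∑ _i ∈ range (d + 1), (#A + 1) ^ d := by
        refine sum_le_sum fun i hi ↦ ?_
        rw [card_powersetCard]
        exact (Nat.choose_le_pow _ _).trans
          ((Nat.pow_le_pow_left (Nat.le_succ _) _).trans
            (Nat.pow_le_pow_right (Nat.succ_pos _) (Nat.lt_succ_iff.1 (mem_range.1 hi))))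
    _ = (d + 1) * (#A + 1) ^ d := by rw [sum_const, card_range, smul_eq_mul]

variable [Fintype α]

lemma sum_min_traceCount_le (P : Finset (Finset α)) (B : Finset α) :
    ∑ x ∈ B, ∑ t ∈ (B.erase x).powerset, min (traceCount P B t) (traceCount P B (insert x t)) ≤
      P.vcDim * #P := by
  rw [← sum_oneInclusionEdges_powerset B fun e ↦
    min (traceCount P B e.1) (traceCount P B (insert e.2 e.1)), ← sum_traceCount_powerset P B]
  exact sum_min_le_of_vcDim_filter_le _ fun k ↦
    (vcDim_mono (filter_lt_traceCount_subset k)).trans (vcDim_image_inter_le P B)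

lemma card_mul_le_card_image_inter_mul_add {δ : ℕ}
    (hsep : ∀ R ∈ P, ∀ S ∈ P, R ≠ S → δ ≤ #(symmDiff R S)) (A : Finset α) :
    #P * δ ≤ #(P.image (· ∩ A)) * δ + 2 * ∑ x ∈ Aᶜ, ∑ t ∈ A.powerset,
      min (traceCount P (insert x A) t) (traceCount P (insert x A) (insert x t)) := by
  set g : Finset α → ℕ := fun t ↦ ∑ x ∈ Aᶜ,
    min (traceCount P (insert x A) t) (traceCount P (insert x A) (insert x t))
  have hfiber : ∀ t ⊆ A, #{R ∈ P | R ∩ A = t} * δ ≤ δ + 2 * g t := by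
    intro t ht
    refine (card_mul_le_of_le_card_symmDiff _ fun R hR S hS ↦
      hsep R (mem_filter.1 hR).1 S (mem_filter.1 hS).1).trans_eq ?_
    -- the members of a fiber all agree on `A`, so only the points of `Aᶜ` contribute
    rw [← sum_subset (subset_univ Aᶜ)]
    · exact congrArg _ (congrArg _ (sum_congr rfl fun x hx ↦ by
        rw [traceCount_insert (mem_compl.1 hx) ht, traceCount_insert_insert (mem_compl.1 hx) ht]))
    · intro x _ hx
      rw [mem_compl, not_not] at hx
      simp only [filter_filter, Nat.min_eq_zero_iff, card_eq_zero, filter_eq_empty_iff]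
      by_cases hxt : x ∈ t
      · exact Or.inl fun R _ h ↦ h.2 (mem_inter.1 (h.1 ▸ hxt)).1
      · exact Or.inr fun R _ h ↦ hxt (h.1 ▸ mem_inter.2 ⟨h.2, hx⟩)
  have himage : P.image (· ∩ A) ⊆ A.powerset :=
    image_subset_iff.2 fun _ _ ↦ mem_powerset.2 inter_subset_right
  calc #P * δ = ∑ t ∈ P.image (· ∩ A), #{R ∈ P | R ∩ A = t} * δ := by
        rw [card_eq_sum_card_image (· ∩ A) P, sum_mul]
    _ ≤ ∑ t ∈ P.image (· ∩ A), (δ + 2 * g t) :=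
        sum_le_sum fun t ht ↦ hfiber t (mem_powerset.1 (himage ht))
    _ = #(P.image (· ∩ A)) * δ + 2 * ∑ t ∈ P.image (· ∩ A), g t := by
        rw [sum_add_distrib, sum_const, smul_eq_mul, mul_sum]
    _ ≤ #(P.image (· ∩ A)) * δ + 2 * ∑ t ∈ A.powerset, g t := by
        gcongr
    _ = _ := by rw [sum_comm]

end Traces

variable [Fintype α] {P : Finset (Finset α)} {d δ : ℕ}

lemma sum_powersetCard_sum_compl {M : Type*} [AddCommMonoid M]
    (f : Finset α → α → M) (k : ℕ) :
    ∑ A ∈ powersetCard k univ, ∑ x ∈ Aᶜ, f A x =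
      ∑ B ∈ powersetCard (k + 1) univ, ∑ x ∈ B, f (B.erase x) x := by
  rw [sum_sigma', sum_sigma']
  refine sum_nbij' (fun p ↦ ⟨insert p.2 p.1, p.2⟩) (fun p ↦ ⟨p.1.erase p.2, p.2⟩)
    ?_ ?_ ?_ ?_ ?_
  · rintro ⟨A, x⟩ hp
    simp only [mem_sigma, mem_powersetCard_univ, mem_compl] at hp ⊢
    exact ⟨by rw [card_insert_of_notMem hp.2, hp.1], mem_insert_self x A⟩
  · rintro ⟨B, x⟩ hp
    simp only [mem_sigma, mem_powersetCard_univ, mem_compl] at hp ⊢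
    exact ⟨by rw [card_erase_of_mem hp.2, hp.1, Nat.add_sub_cancel], notMem_erase x B⟩
  · rintro ⟨A, x⟩ hp
    simp only [mem_sigma, mem_compl] at hp
    simp [erase_insert hp.2]
  · rintro ⟨B, x⟩ hp
    simp only [mem_sigma] at hp
    simp [insert_erase hp.2]
  · rintro ⟨A, x⟩ hp
    simp only [mem_sigma, mem_compl] at hp
    simp [erase_insert hp.2]

lemma choose_mul_card_mul_le (hd : P.vcDim ≤ d)
    (hsep : ∀ R ∈ P, ∀ S ∈ P, R ≠ S → δ ≤ #(symmDiff R S)) (k : ℕ) :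
    (Fintype.card α).choose k * (#P * δ) ≤ (Fintype.card α).choose k * ((d + 1) * (k + 1) ^ d * δ) +
      2 * ((Fintype.card α).choose (k + 1) * (d * #P)) := by
  set f : Finset α → α → ℕ := fun A x ↦ ∑ t ∈ A.powerset,
    min (traceCount P (insert x A) t) (traceCount P (insert x A) (insert x t))
  have hA : ∀ A ∈ powersetCard k univ,
      #P * δ ≤ (d + 1) * (k + 1) ^ d * δ + 2 * ∑ x ∈ Aᶜ, f A x := by
    intro A hA
    have := card_image_inter_le hd A
    rw [mem_powersetCard_univ.1 hA] at this
    exact (card_mul_le_card_image_inter_mul_add hsep A).trans (by gcongr)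
  have hB : ∀ B ∈ powersetCard (k + 1) univ, ∑ x ∈ B, f (B.erase x) x ≤ d * #P := by
    intro B _
    calc ∑ x ∈ B, f (B.erase x) x
        = ∑ x ∈ B, ∑ t ∈ (B.erase x).powerset,
            min (traceCount P B t) (traceCount P B (insert x t)) :=
          sum_congr rfl fun x hx ↦ by simp only [f, insert_erase hx]
      _ ≤ P.vcDim * #P := sum_min_traceCount_le P B
      _ ≤ d * #P := by gcongr
  calc (Fintype.card α).choose k * (#P * δ) = ∑ _A ∈ powersetCard k univ, #P * δ := by
        rw [sum_const, card_powersetCard, card_univ, smul_eq_mul]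
    _ ≤ ∑ A ∈ powersetCard k univ, ((d + 1) * (k + 1) ^ d * δ + 2 * ∑ x ∈ Aᶜ, f A x) :=
        sum_le_sum hA
    _ = (Fintype.card α).choose k * ((d + 1) * (k + 1) ^ d * δ) +
          2 * ∑ B ∈ powersetCard (k + 1) univ, ∑ x ∈ B, f (B.erase x) x := by
        rw [sum_add_distrib, sum_const, card_powersetCard, card_univ, smul_eq_mul, ← mul_sum,
          sum_powersetCard_sum_compl]
    _ ≤ (Fintype.card α).choose k * ((d + 1) * (k + 1) ^ d * δ) +
          2 * ((Fintype.card α).choose (k + 1) * (d * #P)) := by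
        gcongr
        refine (sum_le_sum hB).trans_eq ?_
        rw [sum_const, card_powersetCard, card_univ, smul_eq_mul]

theorem card_le_two_mul_of_le_card_symmDiff (hd : P.vcDim ≤ d)
    (hsep : ∀ R ∈ P, ∀ S ∈ P, R ≠ S → δ ≤ #(symmDiff R S)) (hδ : 0 < δ) {k : ℕ}
    (hk : 4 * d * Fintype.card α ≤ (k + 1) * δ) :
    #P ≤ 2 * ((d + 1) * (k + 1) ^ d) := by
  set n := Fintype.card α
  obtain hkn | hnk := le_or_gt k n
  · have hc : n.choose (k + 1) * (k + 1) = n.choose k * (n - k) := Nat.choose_succ_right_eq n k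
    have hcpos : 0 < n.choose k := Nat.choose_pos hkn
    have h1 : (k + 1) * (n.choose k * (#P * δ)) ≤
        (k + 1) * (n.choose k * ((d + 1) * (k + 1) ^ d * δ)) +
          2 * (n.choose k * (n - k)) * (d * #P) := by
      rw [← hc]
      nlinarith [choose_mul_card_mul_le hd hsep k]
    have h2 : 4 * ((n - k) * d) ≤ (k + 1) * δ :=
      le_trans (by nlinarith [Nat.sub_le n k]) hk
    -- by `h2`, the edge term of `h1` is at most half of its left-hand side
    have h3 : n.choose k * ((k + 1) * δ) * #P ≤
        n.choose k * ((k + 1) * δ) * (2 * ((d + 1) * (k + 1) ^ d)) := by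
      nlinarith [Nat.mul_le_mul_left (n.choose k * #P) h2]
    exact Nat.le_of_mul_le_mul_left h3 (by positivity)
  · calc #P = #(P.image (· ∩ univ)) := by simp
      _ ≤ (d + 1) * (#(univ : Finset α) + 1) ^ d := card_image_inter_le hd univ
      _ ≤ (d + 1) * (k + 1) ^ d := by rw [card_univ]; gcongr
      _ ≤ 2 * ((d + 1) * (k + 1) ^ d) := Nat.le_mul_of_pos_left _ two_pos

end Finset

/-- Haussler's packing lemma: a δ-separated set system of VC-dimension at most `d`
on `n` elements has at most `C * (n/δ)^d` sets, where `C` depends only on `d`. -/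
theorem packing_lemma (d : ℕ) :
    ∃ C : ℝ, 0 < C ∧
      ∀ (α : Type) [Fintype α] [DecidableEq α] (P : Finset (Finset α)) (δ : ℕ),
        (∀ Y : Finset α, (∀ Z ⊆ Y, ∃ S ∈ P, S ∩ Y = Z) → Y.card ≤ d) →
        1 ≤ δ → δ ≤ Fintype.card α →
        (∀ R ∈ P, ∀ S ∈ P, R ≠ S → δ ≤ (symmDiff R S).card) →
        (P.card : ℝ) ≤ C * ((Fintype.card α : ℝ) / (δ : ℝ)) ^ d := by
  refine ⟨2 * (d + 1) * (4 * d + 1) ^ d, by positivity, ?_⟩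
  intro α _ _ P δ hVC hδ hδn hsep
  have hd : P.vcDim ≤ d := Finset.sup_le fun Y hY ↦ hVC Y fun Z hZ ↦ by
    obtain ⟨S, hS, hYS⟩ := mem_shatterer.1 hY hZ
    exact ⟨S, hS, by rwa [inter_comm]⟩
  set n := Fintype.card α
  have hk : 4 * d * n ≤ (4 * d * n / δ + 1) * δ := by
    rw [add_mul, one_mul]
    exact (Nat.lt_div_mul_add hδ).le
  set k := 4 * d * n / δ
  have hr : (1 : ℝ) ≤ n / δ := (one_le_div (by positivity)).2 (by exact_mod_cast hδn)
  have hkr : (k : ℝ) + 1 ≤ (4 * d + 1) * (n / δ) := by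
    have : (k : ℝ) ≤ 4 * d * (n / δ) := by
      refine Nat.cast_div_le.trans_eq ?_
      push_cast
      ring
    linarith
  calc (#P : ℝ) ≤ 2 * ((d + 1) * ((k : ℝ) + 1) ^ d) := by
        exact_mod_cast card_le_two_mul_of_le_card_symmDiff hd hsep hδ hk
    _ ≤ 2 * ((d + 1) * ((4 * d + 1) * (n / δ)) ^ d) := by gcongr
    _ = 2 * (d + 1) * (4 * d + 1) ^ d * (n / δ) ^ d := by rw [mul_pow]; ring
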